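/- arXiv:1109.3753 — 4 statements merged into one kernel-verified Lean document; each statement's English description precedes it below -/
import Mathlib

section
/- Let σ₀ be the 2×2 identity matrix and σ₁ the bit-flip (Pauli-X) matrix over ℂ. Let λ₀₀₀₀, λ₀₀₁₁, λ₁₁₀₀, λ₁₁₁₁ ∈ ℂ with |λ₀₀₀₀|² + |λ₀₀₁₁|² + |λ₁₁₀₀|² + |λ₁₁₁₁|² = 1 and 2(|λ₀₀₀₀|² + |λ₁₁₀₀|²) = |λ₀₀₁₁|² + |λ₁₁₁₁|², and set |ψ⟩ = λ₀₀₀₀|0000⟩ + λ₀₀₁₁|0011⟩ + λ₁₁₀₀|1100⟩ + λ₁₁₁₁|1111⟩ in (ℂ²)^{⊗4} and |λ| = |λ₀₀₀₀|² + |λ₁₁₀₀|². With T = 5, R = 3, P = 1, S = 0, define X_{1.2} = 1^{⊗2} ⊗ (R|00⟩⟨00| + S|01⟩⟨01| + T|10⟩⟨10| + P|11⟩⟨11|) and X_{2.2} = 1^{⊗2} ⊗ (R|00⟩⟨00| + T|01⟩⟨01| + S|10⟩⟨10| + P|11⟩⟨11|). For κ₁,κ₂,κ₃,κ₄ ∈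 {0,1} set ρ_fin = (σ_{κ₁}⊗σ_{κ₂}⊗σ_{κ₃}⊗σ_{κ₄}) |ψ⟩⟨ψ| (σ_{κ₁}⊗σ_{κ₂}⊗σ_{κ₃}⊗σ_{κ₄}) and E_{i.2} = tr(X_{i.2} ρ_fin). Then, independently of κ₁ and κ₂: E_{1.2} = E_{2.2} = 5|λ| when (κ₃,κ₄) = (0,0); E_{1.2} = 5|λ| and E_{2.2} = 10|λ| when (κ₃,κ₄) = (1,0); E_{1.2} = 10|λ| and E_{2.2} = 5|λ| when (κ₃,κ₄) = (0,1); and E_{1.2} = E_{2.2} = 7|λ| when (κ₃,κ₄) = (1,1). -/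
open Matrix

/-- The single-qubit operators: `sig 0` is the identity, `sig 1` the bit-flip. -/
noncomputable def sig : Fin 2 → Matrix (Fin 2) (Fin 2) ℂ
  | 0 => 1
  | 1 => !![0, 1; 1, 0]

/-- Tensor (Kronecker) product of `n` one-qubit operators, realized as a matrix
indexed by `Fin n → Fin 2`. -/
noncomputable def tensorOp {n : ℕ} (A : Fin n → Matrix (Fin 2) (Fin 2) ℂ) :
    Matrix (Fin n → Fin 2) (Fin n → Fin 2) ℂ :=
  Matrix.of fun v w => ∏ j, A j (v j) (w j)

/-- The computational basis vector `|x⟩` of `(ℂ²)^⊗n`. -/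
def basisKet {n : ℕ} (x : Fin n → Fin 2) : (Fin n → Fin 2) → ℂ :=
  fun v => if v = x then 1 else 0

/-- The rank-one operator `|ψ⟩⟨ψ|`. -/
noncomputable def ketbra {n : ℕ} (ψ : (Fin n → Fin 2) → ℂ) :
    Matrix (Fin n → Fin 2) (Fin n → Fin 2) ℂ :=
  Matrix.vecMulVec ψ (star ψ)

/-- `Σ_{x,y} O x y |x y⟩⟨x y|` on qubits `i, j`, tensored with the identity on
all remaining qubits (a diagonal operator). -/
noncomputable def payoffOp {n : ℕ} (i j : Fin n) (O : Matrix (Fin 2) (Fin 2) ℝ) :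
    Matrix (Fin n → Fin 2) (Fin n → Fin 2) ℂ :=
  Matrix.of fun v w => if v = w then (O (v i) (v j) : ℂ) else 0

/-! `σ_κ₁ ⊗ ⋯ ⊗ σ_κ₄` is the permutation matrix of the translation `v ↦ v + κ` of
`(ℤ/2)⁴`, so the diagonal of `ρ_fin` at `v` is `|ψ(v + κ)|²`. The payoff operator is diagonal,
hence `E = Σ_u O(u₃ + κ₃, u₄ + κ₄) |ψ_u|²`. On the support of `ψ` the last two bits agree, so
`E = |λ| O(κ₃, κ₄) + (|λ₀₀₁₁|² + |λ₁₁₁₁|²) O(κ₃ + 1, κ₄ + 1) = |λ| (O(κ₃, κ₄) + 2 O(κ₃ + 1, κ₄ + 1))`,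
and the four cases are read off the two payoff tables. -/

section
variable {n : ℕ}

lemma sig_apply (κ x y : Fin 2) : sig κ x y = if y = x + κ then 1 else 0 := by
  fin_cases κ <;> fin_cases x <;> fin_cases y <;> simp [sig, one_apply]

lemma fin_two_add_add_self (a b : Fin 2) : a + b + b = a := by
  decide +revert

lemma pi_fin_two_add_add_self (v κ : Fin n → Fin 2) : v + κ + κ = v :=
  funext fun j => fin_two_add_add_self (v j) (κ j)

lemma pi_fin_two_eq_add_comm {v w κ : Fin n → Fin 2} : v = w + κ ↔ w = v + κ := by
  constructor <;> rintro rfl <;> rw [pi_fin_two_add_add_self]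

lemma tensorOp_sig_apply (κ v w : Fin n → Fin 2) :
    tensorOp (fun m => sig (κ m)) v w = if w = v + κ then 1 else 0 := by
  simp only [tensorOp, of_apply, sig_apply, Finset.prod_boole, Finset.mem_univ, true_implies,
    funext_iff, Pi.add_apply]

lemma tensorOp_sig_mul_apply (κ : Fin n → Fin 2) (M : Matrix (Fin n → Fin 2) (Fin n → Fin 2) ℂ)
    (v w : Fin n → Fin 2) : (tensorOp (fun m => sig (κ m)) * M) v w = M (v + κ) w := by
  simp [mul_apply, tensorOp_sig_apply]

lemma mul_tensorOp_sig_apply (κ : Fin n → Fin 2) (M : Matrix (Fin n → Fin 2) (Fin n → Fin 2) ℂ)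
    (v w : Fin n → Fin 2) : (M * tensorOp (fun m => sig (κ m))) v w = M v (w + κ) := by
  simp [mul_apply, tensorOp_sig_apply, pi_fin_two_eq_add_comm (v := w)]

lemma trace_payoffOp_mul (i j : Fin n) (O : Matrix (Fin 2) (Fin 2) ℝ)
    (M : Matrix (Fin n → Fin 2) (Fin n → Fin 2) ℂ) :
    (payoffOp i j O * M).trace = ∑ v, (O (v i) (v j) : ℂ) * M v v := by
  simp [trace, mul_apply, payoffOp]

lemma ketbra_apply_self (ψ : (Fin n → Fin 2) → ℂ) (v : Fin n → Fin 2) :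
    ketbra ψ v v = Complex.normSq (ψ v) := by
  simp [ketbra, vecMulVec_apply, Complex.mul_conj]

lemma trace_payoffOp_mul_conj_ketbra (i j : Fin n) (O : Matrix (Fin 2) (Fin 2) ℝ)
    (κ : Fin n → Fin 2) (ψ : (Fin n → Fin 2) → ℂ) :
    (payoffOp i j O * (tensorOp (fun m => sig (κ m)) * ketbra ψ *
        tensorOp (fun m => sig (κ m)))).trace
      = ∑ u, (O (u i + κ i) (u j + κ j) : ℂ) * Complex.normSq (ψ u) := by
  simp only [trace_payoffOp_mul, mul_tensorOp_sig_apply, tensorOp_sig_mul_apply,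
    ketbra_apply_self]
  exact Fintype.sum_equiv (Equiv.addRight κ) _ _ fun v => by
    simp [fin_two_add_add_self]

lemma sum_mul_normSq_sum_basisKet {ι : Type*} [Fintype ι] (a : ι → ℂ) {x : ι → Fin n → Fin 2}
    (hx : Function.Injective x) (c : (Fin n → Fin 2) → ℂ) :
    ∑ u, c u * Complex.normSq (∑ k, a k * basisKet (x k) u)
      = ∑ k, c (x k) * Complex.normSq (a k) := by
  have hψ : ∀ k, ∑ k', a k' * basisKet (x k') (x k) = a k := fun k => by
    classical
    simp [basisKet, hx.eq_iff]
  refine (Fintype.sum_of_injective x hx _ _ (fun u hu => ?_) (fun k => by rw [hψ])).symm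
  have : ∀ k, u ≠ x k := fun k hk => hu ⟨k, hk.symm⟩
  simp [basisKet, this]

end

lemma trace_payoffOp_mul_conj_ketbra_of_two_mul_eq (l0000 l0011 l1100 l1111 : ℂ)
    (hcond : 2 * (Complex.normSq l0000 + Complex.normSq l1100)
      = Complex.normSq l0011 + Complex.normSq l1111)
    (O : Matrix (Fin 2) (Fin 2) ℝ) (κ : Fin 4 → Fin 2) :
    let ψ : (Fin 4 → Fin 2) → ℂ := fun v =>
      l0000 * basisKet ![0, 0, 0, 0] v + l0011 * basisKet ![0, 0, 1, 1] v
        + l1100 * basisKet ![1, 1, 0, 0] v + l1111 * basisKet ![1, 1, 1, 1] v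
    (payoffOp 2 3 O * (tensorOp (fun m => sig (κ m)) * ketbra ψ *
        tensorOp (fun m => sig (κ m)))).trace
      = (((Complex.normSq l0000 + Complex.normSq l1100)
          * (O (κ 2) (κ 3) + 2 * O (κ 2 + 1) (κ 3 + 1)) : ℝ) : ℂ) := by
  intro ψ
  have hψ : ψ = fun v => ∑ k, ![l0000, l0011, l1100, l1111] k
      * basisKet (![![0, 0, 0, 0], ![0, 0, 1, 1], ![1, 1, 0, 0], ![1, 1, 1, 1]] k) v := by
    funext v
    simp [ψ, Fin.sum_univ_four]
  have hinj : Function.Injective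
      ![(![0, 0, 0, 0] : Fin 4 → Fin 2), ![0, 0, 1, 1], ![1, 1, 0, 0], ![1, 1, 1, 1]] := by
    decide
  rw [trace_payoffOp_mul_conj_ketbra, hψ, sum_mul_normSq_sum_basisKet _ hinj, Fin.sum_univ_four]
  simp [add_comm (1 : Fin 2)]
  have hcondC := congrArg ((↑) : ℝ → ℂ) hcond
  push_cast at hcondC
  linear_combination -(O (κ 2 + 1) (κ 3 + 1) : ℂ) * hcondC

theorem stmt_4_general (l0000 l0011 l1100 l1111 : ℂ)
    (hcond : 2 * (Complex.normSq l0000 + Complex.normSq l1100)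
      = Complex.normSq l0011 + Complex.normSq l1111)
    (κ₁ κ₂ κ₃ κ₄ : Fin 2) :
    let ψ : (Fin 4 → Fin 2) → ℂ := fun v =>
      l0000 * basisKet ![0, 0, 0, 0] v + l0011 * basisKet ![0, 0, 1, 1] v
        + l1100 * basisKet ![1, 1, 0, 0] v + l1111 * basisKet ![1, 1, 1, 1] v
    let X12 := payoffOp (n := 4) 2 3 !![3, 0; 5, 1]
    let X22 := payoffOp (n := 4) 2 3 !![3, 5; 0, 1]
    let U := tensorOp ![sig κ₁, sig κ₂, sig κ₃, sig κ₄]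
    let ρfin := U * ketbra ψ * U
    let lam : ℝ := Complex.normSq l0000 + Complex.normSq l1100
    ((κ₃, κ₄) = (0, 0) →
        (X12 * ρfin).trace = ((5 * lam : ℝ) : ℂ) ∧ (X22 * ρfin).trace = ((5 * lam : ℝ) : ℂ))
      ∧ ((κ₃, κ₄) = (1, 0) →
        (X12 * ρfin).trace = ((5 * lam : ℝ) : ℂ) ∧ (X22 * ρfin).trace = ((10 * lam : ℝ) : ℂ))
      ∧ ((κ₃, κ₄) = (0, 1) →
        (X12 * ρfin).trace = ((10 * lam : ℝ) : ℂ) ∧ (X22 * ρfin).trace = ((5 * lam : ℝ) : ℂ))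
      ∧ ((κ₃, κ₄) = (1, 1) →
        (X12 * ρfin).trace = ((7 * lam : ℝ) : ℂ) ∧ (X22 * ρfin).trace = ((7 * lam : ℝ) : ℂ)) := by
  intro ψ X12 X22 U ρfin lam
  have hU : U = tensorOp fun j => sig (![κ₁, κ₂, κ₃, κ₄] j) :=
    congrArg tensorOp (funext fun j => by fin_cases j <;> rfl)
  have key : ∀ O, (payoffOp 2 3 O * ρfin).trace
      = ((lam * (O κ₃ κ₄ + 2 * O (κ₃ + 1) (κ₄ + 1)) : ℝ) : ℂ) := fun O => by
    show (payoffOp 2 3 O * (U * ketbra ψ * U)).trace = _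
    rw [hU]
    exact trace_payoffOp_mul_conj_ketbra_of_two_mul_eq _ _ _ _ hcond O _
  refine ⟨?_, ?_, ?_, ?_⟩ <;>
  · intro h
    obtain ⟨rfl, rfl⟩ := Prod.mk.inj h
    refine ⟨?_, ?_⟩ <;>
    · rw [key]
      norm_num [show (1 : Fin 2) + 1 = 0 from rfl]
      ring

/-- In the Iqbal–Toor protocol with initial state
`λ₀₀₀₀|0000⟩ + λ₀₀₁₁|0011⟩ + λ₁₁₀₀|1100⟩ + λ₁₁₁₁|1111⟩` satisfying
`2(|λ₀₀₀₀|² + |λ₁₁₀₀|²) = |λ₀₀₁₁|² + |λ₁₁₁₁|²`, and PD payoffs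
`T = 5, R = 3, P = 1, S = 0`, the second-stage expected payoffs are
`(5|λ|,5|λ|)`, `(5|λ|,10|λ|)`, `(10|λ|,5|λ|)`, `(7|λ|,7|λ|)` according as
`(κ₃,κ₄)` equals `(0,0)`, `(1,0)`, `(0,1)`, `(1,1)`, independently of `κ₁,κ₂`,
where `|λ| = |λ₀₀₀₀|² + |λ₁₁₀₀|²`. -/
theorem stmt_4 (l0000 l0011 l1100 l1111 : ℂ)
    (hunit : Complex.normSq l0000 + Complex.normSq l0011 + Complex.normSq l1100
      + Complex.normSq l1111 = 1)
    (hcond : 2 * (Complex.normSq l0000 + Complex.normSq l1100)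
      = Complex.normSq l0011 + Complex.normSq l1111)
    (κ₁ κ₂ κ₃ κ₄ : Fin 2) :
    let ψ : (Fin 4 → Fin 2) → ℂ := fun v =>
      l0000 * basisKet ![0, 0, 0, 0] v + l0011 * basisKet ![0, 0, 1, 1] v
        + l1100 * basisKet ![1, 1, 0, 0] v + l1111 * basisKet ![1, 1, 1, 1] v
    let X12 := payoffOp (n := 4) 2 3 !![3, 0; 5, 1]
    let X22 := payoffOp (n := 4) 2 3 !![3, 5; 0, 1]
    let U := tensorOp ![sig κ₁, sig κ₂, sig κ₃, sig κ₄]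
    let ρfin := U * ketbra ψ * U
    let lam : ℝ := Complex.normSq l0000 + Complex.normSq l1100
    ((κ₃, κ₄) = (0, 0) →
        (X12 * ρfin).trace = ((5 * lam : ℝ) : ℂ) ∧ (X22 * ρfin).trace = ((5 * lam : ℝ) : ℂ))
      ∧ ((κ₃, κ₄) = (1, 0) →
        (X12 * ρfin).trace = ((5 * lam : ℝ) : ℂ) ∧ (X22 * ρfin).trace = ((10 * lam : ℝ) : ℂ))
      ∧ ((κ₃, κ₄) = (0, 1) →
        (X12 * ρfin).trace = ((10 * lam : ℝ) : ℂ) ∧ (X22 * ρfin).trace = ((5 * lam : ℝ) : ℂ))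
      ∧ ((κ₃, κ₄) = (1, 1) →
        (X12 * ρfin).trace = ((7 * lam : ℝ) : ℂ) ∧ (X22 * ρfin).trace = ((7 * lam : ℝ) : ℂ)) :=
  stmt_4_general l0000 l0011 l1100 l1111 hcond κ₁ κ₂ κ₃ κ₄
end

section
/- Let T > R > P > S be real numbers and let λ be a real number with 0 < λ < min{T−R, P−S} / (T−R+P−S). Define F(0,0)=R, F(0,1)=S, F(1,0)=T, F(1,1)=P, and the bimatrix game on action sets {0,1} by u₁(κ₁,κ₂) = λ F(κ₁,κ₂) + (1−λ) F(κ̄₁,κ̄₂) and u₂(κ₁,κ₂) = λ F(κ₂,κ₁) + (1−λ) F(κ̄₂,κ̄₁), where κ̄ = 1−κ. Then action 0 strictly dominates action 1 for both players: u₁(0,κ₂) > u₁(1,κ₂) for every κ₂ ∈ {0,1}, and u₂(κ₁,0) > u₂(κ₁,1) for every κ₁ ∈ {0,1}. -/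
/-- Player 1's stage payoff matrix `F` with `F 0 0 = R`, `F 0 1 = S`,
`F 1 0 = T`, `F 1 1 = P`. -/
noncomputable def Fpay (R S T P : ℝ) : Fin 2 → Fin 2 → ℝ := fun a b => !![R, S; T, P] a b

/-- Player 1's payoff in the Marinatto–Weber quantum game with initial state
`λ₀|00⟩ + λ₁|11⟩`, where `l = |λ₀|²`. -/
noncomputable def u₁ (R S T P l : ℝ) (κ₁ κ₂ : Fin 2) : ℝ :=
  l * Fpay R S T P κ₁ κ₂ + (1 - l) * Fpay R S T P (1 - κ₁) (1 - κ₂)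

/-- Player 2's payoff in the Marinatto–Weber quantum game with initial state
`λ₀|00⟩ + λ₁|11⟩`, where `l = |λ₀|²`. -/
noncomputable def u₂ (R S T P l : ℝ) (κ₁ κ₂ : Fin 2) : ℝ :=
  l * Fpay R S T P κ₂ κ₁ + (1 - l) * Fpay R S T P (1 - κ₂) (1 - κ₁)

/-- A pure Nash equilibrium of a two-player `2×2` bimatrix game. -/
def IsNash (w₁ w₂ : Fin 2 → Fin 2 → ℝ) (a b : Fin 2) : Prop :=
  (∀ a' : Fin 2, w₁ a' b ≤ w₁ a b) ∧ (∀ b' : Fin 2, w₂ a b' ≤ w₂ a b)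

/-- if `0 < λ < min{T−R, P−S}/(T−R+P−S)` then action `0` strictly
dominates action `1` for both players in the bimatrix game `(u₁, u₂)`. -/
theorem stmt_9 (T R P S : ℝ) (hTR : R < T) (hRP : P < R) (hPS : S < P)
    (l : ℝ) (hl0 : 0 < l) (hl1 : l < min (T - R) (P - S) / (T - R + P - S)) :
    (∀ κ₂ : Fin 2, u₁ R S T P l 1 κ₂ < u₁ R S T P l 0 κ₂)
      ∧ (∀ κ₁ : Fin 2, u₂ R S T P l κ₁ 1 < u₂ R S T P l κ₁ 0) := by
  have hd : 0 < T - R + P - S := by linarith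
  have h1 : l * (T - R + P - S) < min (T - R) (P - S) :=
    (lt_div_iff₀ hd).mp hl1
  have h2 : l * (T - R + P - S) < T - R := lt_of_lt_of_le h1 (min_le_left _ _)
  have h3 : l * (T - R + P - S) < P - S := lt_of_lt_of_le h1 (min_le_right _ _)
  constructor <;> intro κ <;> fin_cases κ <;>
    simp [u₁, u₂, Fpay, Matrix.cons_val_zero, Matrix.cons_val_one, Matrix.head_cons] <;>
    nlinarith
end

section
/- Let T > R > P > S be real numbers and let λ be a real number with 0 < λ < min{T−R, P−S} / (T−R+P−S). Define F(0,0)=R, F(0,1)=S, F(1,0)=T, F(1,1)=P, and the bimatrix game on action sets {0,1} by u₁(κ₁,κ₂) = λ F(κ₁,κ₂) + (1−λ) F(κ̄₁,κ̄₂) and u₂(κ₁,κ₂) = λ F(κ₂,κ₁) + (1−λ) F(κ̄₂,κ̄₁), where κ̄ = 1−κ. Then (0,0) is the unique pure Nash equilibrium of this game, and its payoff Q := u₁(0,0) = u₂(0,0) = λR + (1−λ)P satisfies Q > P. -/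
/-- if `0 < λ < min{T−R, P−S}/(T−R+P−S)` then `(0,0)` is the unique
pure Nash equilibrium of the bimatrix game `(u₁, u₂)`, with common payoff
`Q = λR + (1−λ)P > P`. -/
theorem stmt_10 (T R P S : ℝ) (hTR : R < T) (hRP : P < R) (hPS : S < P)
    (l : ℝ) (hl0 : 0 < l) (hl1 : l < min (T - R) (P - S) / (T - R + P - S)) :
    IsNash (u₁ R S T P l) (u₂ R S T P l) 0 0
      ∧ (∀ a b : Fin 2, IsNash (u₁ R S T P l) (u₂ R S T P l) a b → a = 0 ∧ b = 0)
      ∧ u₁ R S T P l 0 0 = l * R + (1 - l) * P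
      ∧ u₂ R S T P l 0 0 = l * R + (1 - l) * P
      ∧ P < l * R + (1 - l) * P := by
  have hD : 0 < T - R + P - S := by linarith
  have hm : l * (T - R + P - S) < min (T - R) (P - S) := (lt_div_iff₀ hD).mp hl1
  have hA : l * (T - R + P - S) < T - R := lt_of_lt_of_le hm (min_le_left _ _)
  have hB : l * (T - R + P - S) < P - S := lt_of_lt_of_le hm (min_le_right _ _)
  have hval : ∀ a b : Fin 2, u₁ R S T P l a b = l * Fpay R S T P a b + (1-l) * Fpay R S T P (1-a) (1-b) := fun a b => rfl
  have e00 : u₁ R S T P l 0 0 = l * R + (1 - l) * P := by simp [u₁, Fpay]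
  have e10 : u₁ R S T P l 1 0 = l * T + (1 - l) * S := by simp [u₁, Fpay]
  have e01 : u₁ R S T P l 0 1 = l * S + (1 - l) * T := by simp [u₁, Fpay]
  have e11 : u₁ R S T P l 1 1 = l * P + (1 - l) * R := by simp [u₁, Fpay]
  have f00 : u₂ R S T P l 0 0 = l * R + (1 - l) * P := by simp [u₂, Fpay]
  have f01 : u₂ R S T P l 0 1 = l * T + (1 - l) * S := by simp [u₂, Fpay]
  have f10 : u₂ R S T P l 1 0 = l * S + (1 - l) * T := by simp [u₂, Fpay]
  have f11 : u₂ R S T P l 1 1 = l * P + (1 - l) * R := by simp [u₂, Fpay]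
  have h1 : l * T + (1 - l) * S < l * R + (1 - l) * P := by nlinarith
  have h2 : l * P + (1 - l) * R < l * S + (1 - l) * T := by nlinarith
  refine ⟨⟨?_, ?_⟩, ?_, e00, f00, by nlinarith⟩
  · rw [Fin.forall_fin_two, e00, e10]; exact ⟨le_refl _, le_of_lt h1⟩
  · rw [Fin.forall_fin_two, f00, f01]; exact ⟨le_refl _, le_of_lt h1⟩
  · intro a b h
    have H1 := h.1
    have H2 := h.2
    fin_cases a <;> fin_cases b <;> simp only [Fin.mk_zero, Fin.mk_one] at H1 H2 ⊢
    · simp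
    · exact absurd (H2 0) (by rw [f00, f01]; exact not_le.mpr h1)
    · exact absurd (H1 0) (by rw [e00, e10]; exact not_le.mpr h1)
    · exact absurd (H1 0) (by rw [e01, e11]; exact not_le.mpr h2)
end

section
/- Let T > R > P > S be real numbers. Then the set of real numbers λ with 0 < λ < min{T−R, P−S} / (T−R+P−S) is infinite; hence there are infinitely many values of λ (equivalently, infinitely many initial states λ₀|00⟩ + λ₁|11⟩ with |λ₀|² = λ) for which the bimatrix game u₁(κ₁,κ₂) = λ F(κ₁,κ₂) + (1−λ) F(κ̄₁,κ̄₂), u₂(κ₁,κ₂) = λ F(κ₂,κ₁) + (1−λ) F(κ̄₂,κ̄₁) (with F(0,0)=R, F(0,1)=S, F(1,0)=T, F(1,1)=P and κ̄ = 1−κ) has (0,0) as its unique pure Nash equilibrium with common payoff Q = λR + (1−λ)P > P. -/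
theorem isNash_iff_of_strictDominant {w₁ w₂ : Fin 2 → Fin 2 → ℝ} {a₀ b₀ : Fin 2}
    (h₁ : ∀ a ≠ a₀, ∀ b, w₁ a b < w₁ a₀ b) (h₂ : ∀ b ≠ b₀, ∀ a, w₂ a b < w₂ a b₀)
    {a b : Fin 2} : IsNash w₁ w₂ a b ↔ a = a₀ ∧ b = b₀ := by
  constructor
  · rintro ⟨hbest₁, hbest₂⟩
    constructor
    · by_contra ha
      exact (h₁ a ha b).not_ge (hbest₁ a₀)
    · by_contra hb
      exact (h₂ b hb a).not_ge (hbest₂ b₀)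
  · rintro ⟨rfl, rfl⟩
    refine ⟨fun a' => ?_, fun b' => ?_⟩
    · rcases eq_or_ne a' a with rfl | ha'
      · exact le_rfl
      · exact (h₁ a' ha' b).le
    · rcases eq_or_ne b' b with rfl | hb'
      · exact le_rfl
      · exact (h₂ b' hb' a).le

section

variable {R S T P l : ℝ}

theorem u₂_eq_u₁_swap (a b : Fin 2) : u₂ R S T P l a b = u₁ R S T P l b a := rfl

@[simp]
theorem u₁_zero_zero : u₁ R S T P l 0 0 = l * R + (1 - l) * P := by
  simp [u₁, Fpay]

theorem u₁_one_lt_u₁_zero (hl : l * (T - R + P - S) < min (T - R) (P - S)) (b : Fin 2) :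
    u₁ R S T P l 1 b < u₁ R S T P l 0 b := by
  have hTR := hl.trans_le (min_le_left _ _)
  have hPS := hl.trans_le (min_le_right _ _)
  fin_cases b <;> simp [u₁, Fpay] <;> linarith

theorem isNash_iff_eq_zero (hl : l * (T - R + P - S) < min (T - R) (P - S)) {a b : Fin 2} :
    IsNash (u₁ R S T P l) (u₂ R S T P l) a b ↔ a = 0 ∧ b = 0 := by
  refine isNash_iff_of_strictDominant ?_ ?_
  · intro a ha b
    rw [Fin.eq_one_of_ne_zero a ha]
    exact u₁_one_lt_u₁_zero hl b
  · intro b hb a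
    rw [Fin.eq_one_of_ne_zero b hb, u₂_eq_u₁_swap, u₂_eq_u₁_swap]
    exact u₁_one_lt_u₁_zero hl a

end

/-- the set of `λ` with `0 < λ < min{T−R, P−S}/(T−R+P−S)` is
infinite, and for each such `λ` the bimatrix game `(u₁, u₂)` has `(0,0)` as its
unique pure Nash equilibrium, with common payoff `Q = λR + (1−λ)P > P`. -/
theorem stmt_11 (T R P S : ℝ) (hTR : R < T) (hRP : P < R) (hPS : S < P) :
    {l : ℝ | 0 < l ∧ l < min (T - R) (P - S) / (T - R + P - S)}.Infinite
      ∧ ∀ l ∈ {l : ℝ | 0 < l ∧ l < min (T - R) (P - S) / (T - R + P - S)},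
          IsNash (u₁ R S T P l) (u₂ R S T P l) 0 0
            ∧ (∀ a b : Fin 2, IsNash (u₁ R S T P l) (u₂ R S T P l) a b → a = 0 ∧ b = 0)
            ∧ u₁ R S T P l 0 0 = l * R + (1 - l) * P
            ∧ u₂ R S T P l 0 0 = l * R + (1 - l) * P
            ∧ P < l * R + (1 - l) * P := by
  have hD : 0 < T - R + P - S := by linarith
  refine ⟨Set.Ioo_infinite (div_pos (lt_min (by linarith) (by linarith)) hD), ?_⟩
  rintro l ⟨hl₀, hl⟩
  have hlD : l * (T - R + P - S) < min (T - R) (P - S) := (lt_div_iff₀ hD).mp hl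
  refine ⟨(isNash_iff_eq_zero hlD).mpr ⟨rfl, rfl⟩, fun a b => (isNash_iff_eq_zero hlD).mp,
    u₁_zero_zero, u₁_zero_zero, ?_⟩
  nlinarith [mul_pos hl₀ (sub_pos.mpr hRP)]
end
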